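/- If S̃ ∈ Sp(ℂ^{n₁+n₂}) with doubled-up blocks Ŝ_{jk}, and X ∈ Sp(ℂ^{n₂}) is such that I − Ŝ₂₂ X is invertible, then Ψ(X) = Ŝ₁₁ + Ŝ₁₂ X (I − Ŝ₂₂ X)^{-1} Ŝ₂₁ lies in Sp(ℂ^{n₁}). In particular, if I − Ŝ₂₂ is invertible then Ŝ₁₁ + Ŝ₁₂ (I − Ŝ₂₂)^{-1} Ŝ₂₁ ∈ Sp(ℂ^{n₁}). -/

import Mathlib

open Matrix

noncomputable section

/-- Doubled-up matrix `Δ(E₋,E₊)`. -/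
def dbl {R K : Type*} (Em Ep : Matrix R K ℂ) : Matrix (R ⊕ R) (K ⊕ K) ℂ :=
  Matrix.fromBlocks Em Ep (Ep.map (starRingEnd ℂ)) (Em.map (starRingEnd ℂ))

/-- The matrix `J = diag(I, -I)`. -/
def Jm (N : Type*) [DecidableEq N] : Matrix (N ⊕ N) (N ⊕ N) ℂ :=
  Matrix.fromBlocks 1 0 0 (-1)

/-- The `♭` involution `X^♭ = J Xᴴ J`. -/
def flatB {N M : Type*} [Fintype N] [DecidableEq N] [Fintype M] [DecidableEq M]
    (X : Matrix (N ⊕ N) (M ⊕ M) ℂ) : Matrix (M ⊕ M) (N ⊕ N) ℂ :=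
  Jm M * Xᴴ * Jm N

/-- Bogoliubov matrix: doubled-up and `♭`-unitary. -/
def IsBog {N : Type*} [Fintype N] [DecidableEq N]
    (S : Matrix (N ⊕ N) (N ⊕ N) ℂ) : Prop :=
  (∃ Sm Sp, S = dbl Sm Sp) ∧ flatB S * S = 1 ∧ S * flatB S = 1

/-!
Write `S̃` in doubled-up blocks `A, B, C, D` and put `w = (1 - D X)⁻¹`, `Ψ = A + B X w C`.
Reading `S̃^♭ S̃ = 1` blockwise gives `A^♭A + C^♭C = 1`, `A^♭B + C^♭D = 0` and `B^♭B + D^♭D = 1`.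
Expanding `Ψ^♭Ψ` with these, with `X^♭X = 1`, and with `D X w = w - 1`, `w^♭ X^♭ D^♭ = w^♭ - 1`
(both from `(1 - D X) w = 1`), every term cancels except `1`; for square matrices a left
inverse is a right inverse. Doubled-up matrices are the fixed points of the ring automorphism
`M ↦ conj M` with both index halves swapped, so `Ψ` is doubled-up as well.
-/

open Matrix

section Flat

variable {N M P : Type*} [Fintype N] [DecidableEq N] [Fintype M] [DecidableEq M]
  [Fintype P] [DecidableEq P]

lemma Jm_mul_Jm : Jm N * Jm N = 1 := by
  simp [Jm, fromBlocks_multiply, fromBlocks_one]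

lemma flatB_add (A B : Matrix (N ⊕ N) (M ⊕ M) ℂ) : flatB (A + B) = flatB A + flatB B := by
  simp [flatB, conjTranspose_add, Matrix.add_mul, Matrix.mul_add]

lemma flatB_sub (A B : Matrix (N ⊕ N) (M ⊕ M) ℂ) : flatB (A - B) = flatB A - flatB B := by
  simp [flatB, conjTranspose_sub, Matrix.sub_mul, Matrix.mul_sub]

lemma flatB_one : flatB (1 : Matrix (N ⊕ N) (N ⊕ N) ℂ) = 1 := by
  simp [flatB, Jm_mul_Jm]

lemma flatB_mul (A : Matrix (N ⊕ N) (P ⊕ P) ℂ) (B : Matrix (P ⊕ P) (M ⊕ M) ℂ) :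
    flatB (A * B) = flatB B * flatB A := by
  simp only [flatB, conjTranspose_mul, Matrix.mul_assoc]
  rw [← Matrix.mul_assoc (Jm P) (Jm P), Jm_mul_Jm, Matrix.one_mul]

lemma isBog_one : IsBog (1 : Matrix (N ⊕ N) (N ⊕ N) ℂ) := by
  refine ⟨⟨1, 0, ?_⟩, by rw [flatB_one, Matrix.one_mul], by rw [flatB_one, Matrix.one_mul]⟩
  rw [dbl, Matrix.map_zero _ (map_zero _), Matrix.map_one _ (map_zero _) (map_one _),
    fromBlocks_one]

end Flat

section ConjSwap

variable {R K P : Type*}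

def conjSwap (M : Matrix (R ⊕ R) (K ⊕ K) ℂ) : Matrix (R ⊕ R) (K ⊕ K) ℂ :=
  (M.map (starRingEnd ℂ)).submatrix Sum.swap Sum.swap

@[simp]
lemma conjSwap_dbl (Em Ep : Matrix R K ℂ) : conjSwap (dbl Em Ep) = dbl Em Ep := by
  ext (i | i) (j | j) <;> simp [conjSwap, dbl]

lemma exists_eq_dbl_of_conjSwap_eq {M : Matrix (R ⊕ R) (K ⊕ K) ℂ} (h : conjSwap M = M) :
    ∃ Em Ep, M = dbl Em Ep := by
  refine ⟨M.toBlocks₁₁, M.toBlocks₁₂, ?_⟩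
  ext (i | i) (j | j)
  · rfl
  · rfl
  · simp [← congrFun₂ h (Sum.inr i) (Sum.inl j), conjSwap, dbl, toBlocks₁₂]
  · simp [← congrFun₂ h (Sum.inr i) (Sum.inr j), conjSwap, dbl, toBlocks₁₁]

lemma conjSwap_add (M N : Matrix (R ⊕ R) (K ⊕ K) ℂ) :
    conjSwap (M + N) = conjSwap M + conjSwap N := by
  ext i j; simp [conjSwap]

lemma conjSwap_sub (M N : Matrix (R ⊕ R) (K ⊕ K) ℂ) :
    conjSwap (M - N) = conjSwap M - conjSwap N := by
  ext i j; simp [conjSwap]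

lemma conjSwap_mul [Fintype K] (M : Matrix (R ⊕ R) (K ⊕ K) ℂ) (N : Matrix (K ⊕ K) (P ⊕ P) ℂ) :
    conjSwap (M * N) = conjSwap M * conjSwap N := by
  simpa [conjSwap, Matrix.map_mul] using (submatrix_mul_equiv (M.map (starRingEnd ℂ))
    (N.map (starRingEnd ℂ)) Sum.swap (Equiv.sumComm K K) Sum.swap).symm

lemma conjSwap_one [DecidableEq K] : conjSwap (1 : Matrix (K ⊕ K) (K ⊕ K) ℂ) = 1 := by
  simpa [conjSwap, Matrix.map_one _ (map_zero _) (map_one _)] using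
    submatrix_one_equiv (α := ℂ) (Equiv.sumComm K K)

lemma conjSwap_inv [Fintype K] [DecidableEq K] {M : Matrix (K ⊕ K) (K ⊕ K) ℂ}
    (hM : IsUnit M) : conjSwap M⁻¹ = (conjSwap M)⁻¹ := by
  have h := congrArg conjSwap (M.mul_nonsing_inv ((isUnit_iff_isUnit_det M).mp hM))
  rw [conjSwap_mul, conjSwap_one] at h
  exact (inv_eq_right_inv h).symm

end ConjSwap

section Blocks

variable {n1 n2 : Type*}

abbrev dblBlockEquiv (n1 n2 : Type*) : (n1 ⊕ n1) ⊕ (n2 ⊕ n2) ≃ (n1 ⊕ n2) ⊕ (n1 ⊕ n2) :=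
  (Equiv.sumSumSumComm n1 n2 n1 n2).symm

lemma dbl_submatrix_dblBlockEquiv (Sm Sp : Matrix (n1 ⊕ n2) (n1 ⊕ n2) ℂ) :
    (dbl Sm Sp).submatrix (dblBlockEquiv n1 n2) (dblBlockEquiv n1 n2) =
      fromBlocks (dbl Sm.toBlocks₁₁ Sp.toBlocks₁₁) (dbl Sm.toBlocks₁₂ Sp.toBlocks₁₂)
        (dbl Sm.toBlocks₂₁ Sp.toBlocks₂₁) (dbl Sm.toBlocks₂₂ Sp.toBlocks₂₂) := by
  ext ((i | i) | (i | i)) ((j | j) | (j | j)) <;>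
    simp [dbl, toBlocks₁₁, toBlocks₁₂, toBlocks₂₁, toBlocks₂₂, Equiv.sumSumSumComm]

lemma Jm_submatrix_dblBlockEquiv [DecidableEq n1] [DecidableEq n2] :
    (Jm (n1 ⊕ n2)).submatrix (dblBlockEquiv n1 n2) (dblBlockEquiv n1 n2) =
      fromBlocks (Jm n1) 0 0 (Jm n2) := by
  ext ((i | i) | (i | i)) ((j | j) | (j | j)) <;>
    simp [Jm, Equiv.sumSumSumComm, one_apply]

variable [Fintype n1] [DecidableEq n1] [Fintype n2] [DecidableEq n2]

lemma flatB_submatrix_dblBlockEquiv {S : Matrix ((n1 ⊕ n2) ⊕ (n1 ⊕ n2)) ((n1 ⊕ n2) ⊕ (n1 ⊕ n2)) ℂ}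
    {A : Matrix (n1 ⊕ n1) (n1 ⊕ n1) ℂ} {B : Matrix (n1 ⊕ n1) (n2 ⊕ n2) ℂ}
    {C : Matrix (n2 ⊕ n2) (n1 ⊕ n1) ℂ} {D : Matrix (n2 ⊕ n2) (n2 ⊕ n2) ℂ}
    (hS : S.submatrix (dblBlockEquiv n1 n2) (dblBlockEquiv n1 n2) = fromBlocks A B C D) :
    (flatB S).submatrix (dblBlockEquiv n1 n2) (dblBlockEquiv n1 n2) =
      fromBlocks (flatB A) (flatB C) (flatB B) (flatB D) := by
  rw [flatB, ← submatrix_mul_equiv _ _ _ (dblBlockEquiv n1 n2),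
    ← submatrix_mul_equiv _ _ _ (dblBlockEquiv n1 n2), ← conjTranspose_submatrix, hS,
    Jm_submatrix_dblBlockEquiv, fromBlocks_conjTranspose, fromBlocks_multiply,
    fromBlocks_multiply]
  simp [flatB]

lemma blocks_of_flatB_mul_self_eq_one
    {S : Matrix ((n1 ⊕ n2) ⊕ (n1 ⊕ n2)) ((n1 ⊕ n2) ⊕ (n1 ⊕ n2)) ℂ}
    {A : Matrix (n1 ⊕ n1) (n1 ⊕ n1) ℂ} {B : Matrix (n1 ⊕ n1) (n2 ⊕ n2) ℂ}
    {C : Matrix (n2 ⊕ n2) (n1 ⊕ n1) ℂ} {D : Matrix (n2 ⊕ n2) (n2 ⊕ n2) ℂ}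
    (hS : S.submatrix (dblBlockEquiv n1 n2) (dblBlockEquiv n1 n2) = fromBlocks A B C D)
    (h : flatB S * S = 1) :
    flatB A * A + flatB C * C = 1 ∧ flatB A * B + flatB C * D = 0 ∧
      flatB B * A + flatB D * C = 0 ∧ flatB B * B + flatB D * D = 1 := by
  have h' := congrArg (submatrix · (dblBlockEquiv n1 n2) (dblBlockEquiv n1 n2)) h
  rw [← submatrix_mul_equiv _ _ _ (dblBlockEquiv n1 n2), flatB_submatrix_dblBlockEquiv hS, hS,
    fromBlocks_multiply, submatrix_one_equiv, ← fromBlocks_one, fromBlocks_inj] at h'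
  exact h'

end Blocks

section Mobius

/- Rewriting with a product identity inside a right-associated product. -/
private lemma mul_mul_eq_of_mul_eq {a b c d : Type*} [Fintype b] [Fintype c]
    {M : Matrix a b ℂ} {N : Matrix b c ℂ} {P : Matrix a c ℂ} (h : M * N = P)
    (T : Matrix c d ℂ) : M * (N * T) = P * T := by
  rw [← Matrix.mul_assoc, h]

private lemma mul_mul_mul_eq_of_mul_mul_eq {a b c d e : Type*} [Fintype b] [Fintype c]
    [Fintype d] {M : Matrix a b ℂ} {N : Matrix b c ℂ} {Q : Matrix c d ℂ} {P : Matrix a d ℂ}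
    (h : M * (N * Q) = P) (T : Matrix d e ℂ) : M * (N * (Q * T)) = P * T := by
  rw [← Matrix.mul_assoc N Q T, ← Matrix.mul_assoc, h]

variable {α β : Type*} [Fintype α] [DecidableEq α] [Fintype β] [DecidableEq β]

theorem flatB_mul_self_mobius (A : Matrix (α ⊕ α) (α ⊕ α) ℂ) (B : Matrix (α ⊕ α) (β ⊕ β) ℂ)
    (C : Matrix (β ⊕ β) (α ⊕ α) ℂ) (D X w : Matrix (β ⊕ β) (β ⊕ β) ℂ)
    (hAA : flatB A * A + flatB C * C = 1) (hAB : flatB A * B + flatB C * D = 0)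
    (hBA : flatB B * A + flatB D * C = 0) (hBB : flatB B * B + flatB D * D = 1)
    (hX : flatB X * X = 1) (hw : (1 - D * X) * w = 1) :
    flatB (A + B * X * w * C) * (A + B * X * w * C) = 1 := by
  have hDXw : D * (X * w) = w - 1 := by
    rw [← Matrix.mul_assoc, eq_sub_iff_add_eq, ← hw, Matrix.sub_mul, Matrix.one_mul,
      add_sub_cancel]
  have hwXD : flatB w * (flatB X * flatB D) = flatB w - 1 := by
    rw [← flatB_mul, ← flatB_mul, Matrix.mul_assoc, hDXw, flatB_sub, flatB_one]
  have hflat : flatB (A + B * X * w * C) =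
      flatB A + flatB C * (flatB w * (flatB X * flatB B)) := by
    rw [flatB_add, flatB_mul _ C, flatB_mul _ w, flatB_mul B X]
  rw [hflat]
  simp only [Matrix.add_mul, Matrix.mul_add, Matrix.sub_mul, Matrix.mul_sub, Matrix.neg_mul,
    Matrix.mul_neg, Matrix.one_mul, Matrix.mul_assoc,
    eq_sub_of_add_eq hAA, eq_neg_of_add_eq_zero_left hBA,
    mul_mul_eq_of_mul_eq (eq_neg_of_add_eq_zero_left hAB),
    mul_mul_eq_of_mul_eq (eq_sub_of_add_eq hBB),
    mul_mul_eq_of_mul_eq hX, mul_mul_mul_eq_of_mul_mul_eq hDXw, mul_mul_mul_eq_of_mul_mul_eq hwXD]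
  abel

theorem isBog_mobius {n1 n2 : Type*} [Fintype n1] [DecidableEq n1] [Fintype n2] [DecidableEq n2]
    {Sm Sp : Matrix (n1 ⊕ n2) (n1 ⊕ n2) ℂ} (hS : flatB (dbl Sm Sp) * dbl Sm Sp = 1)
    {X : Matrix (n2 ⊕ n2) (n2 ⊕ n2) ℂ} (hX : IsBog X)
    (hU : IsUnit (1 - dbl Sm.toBlocks₂₂ Sp.toBlocks₂₂ * X)) :
    IsBog (dbl Sm.toBlocks₁₁ Sp.toBlocks₁₁ +
      dbl Sm.toBlocks₁₂ Sp.toBlocks₁₂ * X * (1 - dbl Sm.toBlocks₂₂ Sp.toBlocks₂₂ * X)⁻¹ *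
        dbl Sm.toBlocks₂₁ Sp.toBlocks₂₁) := by
  obtain ⟨⟨Xm, Xp, rfl⟩, hXX, -⟩ := hX
  obtain ⟨hAA, hAB, hBA, hBB⟩ :=
    blocks_of_flatB_mul_self_eq_one (dbl_submatrix_dblBlockEquiv Sm Sp) hS
  have hΨ := flatB_mul_self_mobius _ _ _ _ _ _ hAA hAB hBA hBB hXX
    (Matrix.mul_nonsing_inv _ ((isUnit_iff_isUnit_det _).mp hU))
  refine ⟨exists_eq_dbl_of_conjSwap_eq ?_, hΨ, mul_eq_one_comm.mp hΨ⟩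
  simp only [conjSwap_add, conjSwap_mul, conjSwap_inv hU, conjSwap_sub, conjSwap_one,
    conjSwap_dbl]

end Mobius

theorem mobius_maps_bog_to_bog {n1 n2 : Type*}
    [Fintype n1] [DecidableEq n1] [Fintype n2] [DecidableEq n2]
    (Sm Sp : Matrix (n1 ⊕ n2) (n1 ⊕ n2) ℂ) (hS : IsBog (dbl Sm Sp)) :
    (∀ X : Matrix (n2 ⊕ n2) (n2 ⊕ n2) ℂ, IsBog X →
      IsUnit (1 - dbl Sm.toBlocks₂₂ Sp.toBlocks₂₂ * X) →
      IsBog (dbl Sm.toBlocks₁₁ Sp.toBlocks₁₁ +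
        dbl Sm.toBlocks₁₂ Sp.toBlocks₁₂ * X *
          (1 - dbl Sm.toBlocks₂₂ Sp.toBlocks₂₂ * X)⁻¹ *
        dbl Sm.toBlocks₂₁ Sp.toBlocks₂₁)) ∧
    (IsUnit (1 - dbl Sm.toBlocks₂₂ Sp.toBlocks₂₂) →
      IsBog (dbl Sm.toBlocks₁₁ Sp.toBlocks₁₁ +
        dbl Sm.toBlocks₁₂ Sp.toBlocks₁₂ *
          (1 - dbl Sm.toBlocks₂₂ Sp.toBlocks₂₂)⁻¹ *
        dbl Sm.toBlocks₂₁ Sp.toBlocks₂₁)) := by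
  refine ⟨fun X hX hU => isBog_mobius hS.2.1 hX hU, fun hU => ?_⟩
  simpa using isBog_mobius hS.2.1 isBog_one (X := 1) (by simpa using hU)
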